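/- Let C ⊆ ℚ^n be a full-dimensional polyhedral cone and π : ℚ^n → ℚ^d the projection onto the last d coordinates. For v ∈ π(C), the inner normal fan of the fiber C_v = π_{n-d}(π^{-1}(v) ∩ C) equals the v-induced π^∨-coherent subdivision of π^∨(C^∨); that is, N(C_v) = { π^∨(tilde-face_v(C^∨_w)) : w ∈ π^∨(C^∨) }. -/

import Mathlib

open Finset Set Pointwise

noncomputable section

variable {ι : Type*}

/-- The standard pairing between `ι → ℚ` and itself (functionals as vectors). -/
def dotp [Fintype ι] (w x : ι → ℚ) : ℚ := ∑ i, w i * x i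

/-- The face of `P` on which the linear functional `w` attains its minimum. -/
def faceOf [Fintype ι] (P : Set (ι → ℚ)) (w : ι → ℚ) : Set (ι → ℚ) :=
  {x | x ∈ P ∧ ∀ y ∈ P, dotp w x ≤ dotp w y}

/-- `F` is a (nonempty) face of `P`. -/
def IsFaceOf [Fintype ι] (P F : Set (ι → ℚ)) : Prop :=
  F.Nonempty ∧ ∃ w, F = faceOf P w

/-- The (closed) inner normal cone of a face `F` of `P`: all functionals minimized on `F`. -/
def normalCone [Fintype ι] (P F : Set (ι → ℚ)) : Set (ι → ℚ) :=
  {w | F ⊆ faceOf P w}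

/-- The recession cone of `P`. -/
def recCone (P : Set (ι → ℚ)) : Set (ι → ℚ) := {u | ∀ x ∈ P, x + u ∈ P}

/-- The dual cone of `C`. -/
def dualCone [Fintype ι] (C : Set (ι → ℚ)) : Set (ι → ℚ) := {w | ∀ x ∈ C, 0 ≤ dotp w x}

/-- The relative interior of a convex set `S`. -/
def relint (S : Set (ι → ℚ)) : Set (ι → ℚ) :=
  {x | x ∈ S ∧ ∀ y ∈ S, ∃ ε : ℚ, 0 < ε ∧ x + ε • (x - y) ∈ S}

/-- `P` is a polyhedron `{x | A x ≥ b}`. -/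
def IsPolyhedron [Fintype ι] (P : Set (ι → ℚ)) : Prop :=
  ∃ (r : ℕ) (A : Fin r → ι → ℚ) (b : Fin r → ℚ), P = {x | ∀ i, b i ≤ dotp (A i) x}

/-- `C` is a polyhedral cone `{x | A x ≥ 0}`. -/
def IsPolyhedralCone [Fintype ι] (C : Set (ι → ℚ)) : Prop :=
  ∃ (r : ℕ) (A : Fin r → ι → ℚ), C = {x | ∀ i, 0 ≤ dotp (A i) x}

/-- Two polyhedra are normally equivalent: they have the same inner normal fan,
i.e. the same support and the same partition of functionals by faces. -/
def normallyEquiv [Fintype ι] (P P' : Set (ι → ℚ)) : Prop :=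
  (∀ w, (faceOf P w).Nonempty ↔ (faceOf P' w).Nonempty) ∧
  ∀ w w', faceOf P w = faceOf P w' ↔ faceOf P' w = faceOf P' w'

/-- `F` is the smallest face of `P` containing the set `S`. -/
def IsSmallestFaceContaining [Fintype ι] (P S F : Set (ι → ℚ)) : Prop :=
  IsFaceOf P F ∧ S ⊆ F ∧ ∀ G, IsFaceOf P G → S ⊆ G → F ⊆ G

/-- The homogenization `P̃` of `P`: the closure in `(ι ⊕ Unit) → ℚ` of the cone over `P`
placed at height `1`. -/
def tildeSet (P : Set (ι → ℚ)) : Set ((ι ⊕ Unit) → ℚ) :=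
  closure {p | ∃ x ∈ P, ∃ l : ℚ, 0 < l ∧ p = Sum.elim (l • x) (fun _ => l)}

section DotpLemmas
variable [Fintype ι]

theorem dotp_comm (w x : ι → ℚ) : dotp w x = dotp x w :=
  Finset.sum_congr rfl fun i _ => mul_comm _ _

@[simp] theorem dotp_zero_left (x : ι → ℚ) : dotp 0 x = 0 := by simp [dotp]
@[simp] theorem dotp_zero_right (x : ι → ℚ) : dotp x 0 = 0 := by simp [dotp]

theorem dotp_add_right (u x y : ι → ℚ) : dotp u (x + y) = dotp u x + dotp u y := by
  simp [dotp, mul_add, Finset.sum_add_distrib]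

theorem dotp_add_left (x y u : ι → ℚ) : dotp (x + y) u = dotp x u + dotp y u := by
  simp [dotp, add_mul, Finset.sum_add_distrib]

theorem dotp_smul_right (u : ι → ℚ) (c : ℚ) (x : ι → ℚ) : dotp u (c • x) = c * dotp u x := by
  simp only [dotp, Pi.smul_apply, smul_eq_mul, Finset.mul_sum]
  exact Finset.sum_congr rfl fun i _ => by ring

theorem dotp_smul_left (c : ℚ) (x u : ι → ℚ) : dotp (c • x) u = c * dotp x u := by
  rw [dotp_comm, dotp_smul_right, dotp_comm]

theorem dotp_sub_right (u x y : ι → ℚ) : dotp u (x - y) = dotp u x - dotp u y := by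
  simp [dotp, mul_sub, Finset.sum_sub_distrib]

theorem dotp_sub_left (x y u : ι → ℚ) : dotp (x - y) u = dotp x u - dotp y u := by
  simp [dotp, sub_mul, Finset.sum_sub_distrib]

theorem dotp_sum_left {κ : Type*} [Fintype κ] (l : κ → ℚ) (p : κ → ι → ℚ) (x : ι → ℚ) :
    dotp (∑ j, l j • p j) x = ∑ j, l j * dotp (p j) x := by
  unfold dotp
  simp only [Finset.sum_apply, Pi.smul_apply, smul_eq_mul, Finset.sum_mul]
  rw [Finset.sum_comm]
  refine Finset.sum_congr rfl fun j _ => ?_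
  rw [Finset.mul_sum]
  exact Finset.sum_congr rfl fun i _ => by ring

theorem dotp_sum_right {κ : Type*} [Fintype κ] (x : ι → ℚ) (l : κ → ℚ) (p : κ → ι → ℚ) :
    dotp x (∑ j, l j • p j) = ∑ j, l j * dotp x (p j) := by
  rw [dotp_comm, dotp_sum_left]
  exact Finset.sum_congr rfl fun j _ => by rw [dotp_comm]

theorem dotp_self_pos {w : ι → ℚ} (hw : w ≠ 0) : 0 < dotp w w := by
  have hnn : ∀ i ∈ Finset.univ, 0 ≤ w i * w i := fun i _ => mul_self_nonneg _
  rcases lt_or_eq_of_le (Finset.sum_nonneg hnn) with h | h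
  · exact h
  · exfalso; apply hw; funext i
    have := (Finset.sum_eq_zero_iff_of_nonneg hnn).1 h.symm i (Finset.mem_univ i)
    exact mul_self_eq_zero.1 this

theorem dotp_sumElim_split {σ τ : Type*} [Fintype σ] [Fintype τ]
    (u z : (σ ⊕ τ) → ℚ) :
    dotp u z = dotp (u ∘ Sum.inl) (z ∘ Sum.inl) + dotp (u ∘ Sum.inr) (z ∘ Sum.inr) := by
  simp [dotp, Fintype.sum_sum_type]

end DotpLemmas

section Farkas
variable [Fintype ι]

theorem farkas_fin : ∀ (n : ℕ) (b : Fin n → ι → ℚ) (w : ι → ℚ),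
    (∃ l : Fin n → ℚ, (∀ i, 0 ≤ l i) ∧ w = ∑ i, l i • b i) ∨
    (∃ z : ι → ℚ, (∀ i, 0 ≤ dotp (b i) z) ∧ dotp w z < 0) := by
  intro n
  induction n with
  | zero =>
    intro b w
    by_cases hw : w = 0
    · left; exact ⟨0, fun i => le_refl 0, by simp [hw]⟩
    · right
      refine ⟨-w, fun i => (i : Fin 0).elim0, ?_⟩
      rw [show (-w : ι → ℚ) = (-1 : ℚ) • w by funext i; simp, dotp_smul_right]
      have := dotp_self_pos hw
      linarith
  | succ n ih =>
    intro b w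
    rcases ih (fun i => b i.castSucc) w with ⟨l, hl, hw⟩ | ⟨z, hz, hwz⟩
    · left
      refine ⟨Fin.snoc l 0, ?_, ?_⟩
      · intro i
        refine Fin.lastCases ?_ ?_ i
        · simp
        · intro j; simp [Fin.snoc_castSucc]; exact hl j
      · rw [Fin.sum_univ_castSucc]
        simp [Fin.snoc_castSucc]
        exact hw
    · by_cases hlast : 0 ≤ dotp (b (Fin.last n)) z
      · right
        refine ⟨z, ?_, hwz⟩
        intro i
        refine Fin.lastCases hlast (fun j => hz j) i
      · push_neg at hlast
        set β := dotp (b (Fin.last n)) z with hβ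
        have hβneg : β < 0 := hlast
        set L := b (Fin.last n) with hL
        set w' := w - (dotp w z / β) • L with hw'
        set b' : Fin n → ι → ℚ := fun i => b i.castSucc - (dotp (b i.castSucc) z / β) • L with hb'
        rcases ih b' w' with ⟨μ, hμ, hweq⟩ | ⟨z', hz', hwz'⟩
        · -- reconstruct cone membership for the full family
          left
          set γ := dotp w z / β - ∑ i, μ i * (dotp (b i.castSucc) z / β) with hγ
          have hγ0 : 0 ≤ γ := by
            have h1 : 0 < dotp w z / β := div_pos_of_neg_of_neg hwz hβneg
            have h2 : ∀ i ∈ Finset.univ, μ i * (dotp (b i.castSucc) z / β) ≤ 0 := by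
              intro i _
              apply mul_nonpos_of_nonneg_of_nonpos (hμ i)
              exact div_nonpos_of_nonneg_of_nonpos (hz i) (le_of_lt hβneg)
            have := Finset.sum_nonpos h2
            rw [hγ]; linarith
          refine ⟨Fin.snoc μ γ, ?_, ?_⟩
          · intro i
            refine Fin.lastCases ?_ ?_ i
            · simpa using hγ0
            · intro j; simpa using hμ j
          · rw [Fin.sum_univ_castSucc]
            simp only [Fin.snoc_castSucc, Fin.snoc_last]
            have expand : ∑ i, μ i • b i.castSucc
                = (∑ i, μ i • b' i) + (∑ i, μ i * (dotp (b i.castSucc) z / β)) • L := by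
              rw [Finset.sum_smul]
              rw [← Finset.sum_add_distrib]
              refine Finset.sum_congr rfl fun i _ => ?_
              rw [hb']
              funext k
              simp [smul_sub, mul_smul]
            rw [expand, ← hweq, hw']
            funext k
            simp
            ring
        · right
          set z'' := z' - (dotp L z' / β) • z with hz''
          have key : ∀ u : ι → ℚ, dotp u z'' = dotp u z' - (dotp L z' / β) * dotp u z := by
            intro u
            rw [hz'', dotp_sub_right, dotp_smul_right]
          have hβne : β ≠ 0 := ne_of_lt hβneg
          have keyL : dotp L z'' = 0 := by
            rw [key, ← hβ]; field_simp; ring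
          have keyb : ∀ i : Fin n, dotp (b i.castSucc) z'' = dotp (b' i) z' := by
            intro i
            rw [key, hb', dotp_sub_left, dotp_smul_left]
            have : dotp L z' / β * dotp (b i.castSucc) z
                = dotp (b i.castSucc) z / β * dotp L z' := by ring
            rw [this]
          have keyw : dotp w z'' = dotp w' z' := by
            rw [key, hw', dotp_sub_left, dotp_smul_left]
            have : dotp L z' / β * dotp w z = dotp w z / β * dotp L z' := by ring
            rw [this]
          refine ⟨z'', ?_, by rw [keyw]; exact hwz'⟩
          intro i
          refine Fin.lastCases ?_ ?_ i
          · rw [← hL, keyL]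
          · intro j; rw [keyb]; exact hz' j

theorem farkas {κ : Type*} [Fintype κ] (b : κ → ι → ℚ) (w : ι → ℚ) :
    (∃ l : κ → ℚ, (∀ i, 0 ≤ l i) ∧ w = ∑ i, l i • b i) ∨
    (∃ z : ι → ℚ, (∀ i, 0 ≤ dotp (b i) z) ∧ dotp w z < 0) := by
  classical
  let e := Fintype.equivFin κ
  rcases farkas_fin (Fintype.card κ) (fun i => b (e.symm i)) w with ⟨l, hl, hw⟩ | ⟨z, hz, hwz⟩
  · left
    refine ⟨fun j => l (e j), fun j => hl _, ?_⟩
    rw [hw, ← Equiv.sum_comp e (fun i => l i • b (e.symm i))]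
    simp
  · right
    exact ⟨z, fun i => by simpa using hz (e i), hwz⟩

end Farkas

section LP
variable [Fintype ι]

theorem dotp_neg_left (A x : ι → ℚ) : dotp (-A) x = - dotp A x := by
  simp [dotp, neg_mul, Finset.sum_neg_distrib]

theorem dotp_elim {σ τ : Type*} [Fintype σ] [Fintype τ] (A : σ → ℚ) (B : τ → ℚ)
    (ξ : (σ ⊕ τ) → ℚ) :
    dotp (Sum.elim A B) ξ = dotp A (ξ ∘ Sum.inl) + dotp B (ξ ∘ Sum.inr) := by
  rw [dotp_sumElim_split]; simp

theorem dotp_single {κ : Type*} [Fintype κ] [DecidableEq κ] (j : κ) (y : κ → ℚ) :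
    dotp (Pi.single j 1) y = y j := by
  simp [dotp, Pi.single_apply, ite_mul]

theorem dotp_unit (A B : Unit → ℚ) : dotp A B = A () * B () := by
  simp [dotp]

theorem farkas_affine {κ : Type*} [Fintype κ] (p : κ → ι → ℚ) (q : κ → ℚ)
    (hempty : ¬ ∃ x : ι → ℚ, ∀ j, q j ≤ dotp (p j) x) :
    ∃ μ : κ → ℚ, (∀ j, 0 ≤ μ j) ∧ ∑ j, μ j • p j = 0 ∧ 0 < ∑ j, μ j * q j := by
  classical
  set B : (κ ⊕ Unit) → (ι ⊕ Unit) → ℚ :=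
    Sum.elim (fun j => Sum.elim (p j) (fun _ => -q j)) (fun _ => Sum.elim 0 (fun _ => 1)) with hB
  set w₀ : (ι ⊕ Unit) → ℚ := Sum.elim 0 (fun _ => -1) with hw₀
  rcases farkas B w₀ with ⟨l, hl, hw⟩ | ⟨z, hz, hwz⟩
  · -- extract the certificate
    refine ⟨fun j => l (Sum.inl j), fun j => hl _, ?_, ?_⟩
    · funext i
      have h1 := congrFun hw (Sum.inl i)
      rw [Fintype.sum_sum_type] at h1
      simp only [Finset.sum_apply, Pi.smul_apply, smul_eq_mul, hB, hw₀] at h1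
      simp only [Sum.elim_inl, Sum.elim_inr] at h1
      simp only [Finset.sum_apply, Pi.smul_apply, smul_eq_mul]
      simp at h1 ⊢
      linarith [h1]
    · have h2 := congrFun hw (Sum.inr ())
      rw [Fintype.sum_sum_type] at h2
      simp only [Finset.sum_apply, Pi.smul_apply, smul_eq_mul, hB, hw₀] at h2
      simp only [Sum.elim_inl, Sum.elim_inr] at h2
      simp at h2
      have : ∑ j, l (Sum.inl j) * q j = 1 + l (Sum.inr ()) := by
        have : ∑ j, l (Sum.inl j) * (-q j) = - ∑ j, l (Sum.inl j) * q j := by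
          rw [← Finset.sum_neg_distrib]
          exact Finset.sum_congr rfl fun j _ => by ring
        linarith [h2, this]
      rw [this]
      have := hl (Sum.inr ())
      linarith
  · -- a solution exists, contradiction
    exfalso
    apply hempty
    have ht : 0 < z (Sum.inr ()) := by
      rw [hw₀, dotp_elim, dotp_unit] at hwz
      simp at hwz
      exact hwz
    set t := z (Sum.inr ()) with htdef
    refine ⟨t⁻¹ • (z ∘ Sum.inl), fun j => ?_⟩
    have hj := hz (Sum.inl j)
    rw [hB] at hj
    simp only [Sum.elim_inl] at hj
    rw [dotp_elim, dotp_unit] at hj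
    simp only [Function.comp] at hj
    have hq : q j * t ≤ dotp (p j) (z ∘ Sum.inl) := by
      simp at hj
      nlinarith [hj]
    rw [dotp_smul_right]
    calc q j = (q j * t) * t⁻¹ := by field_simp
      _ ≤ dotp (p j) (z ∘ Sum.inl) * t⁻¹ := by
          apply mul_le_mul_of_nonneg_right hq (le_of_lt (inv_pos.2 ht))
      _ = t⁻¹ * dotp (p j) (z ∘ Sum.inl) := by ring

theorem lp_master {κ : Type*} [Fintype κ] [DecidableEq κ] (p : κ → ι → ℚ) (q : κ → ℚ)
    (g : ι → ℚ) (x₀ : ι → ℚ) (hx₀ : ∀ j, q j ≤ dotp (p j) x₀)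
    (lam0 : κ → ℚ) (hlam0 : ∀ j, 0 ≤ lam0 j) (hg : g = ∑ j, lam0 j • p j) :
    ∃ (x : ι → ℚ) (lam : κ → ℚ), (∀ j, q j ≤ dotp (p j) x) ∧ (∀ j, 0 ≤ lam j) ∧
      g = ∑ j, lam j • p j ∧ dotp g x = ∑ j, lam j * q j := by
  classical
  set P : (κ ⊕ (κ ⊕ ((ι ⊕ ι) ⊕ Unit))) → (ι ⊕ κ) → ℚ :=
    Sum.elim (fun j => Sum.elim (p j) 0)
      (Sum.elim (fun j => Sum.elim 0 (Pi.single j 1))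
        (Sum.elim
          (Sum.elim (fun k => Sum.elim 0 (fun j => p j k))
            (fun k => Sum.elim 0 (fun j => -(p j k))))
          (fun _ => Sum.elim (-g) q))) with hP
  set Q : (κ ⊕ (κ ⊕ ((ι ⊕ ι) ⊕ Unit))) → ℚ :=
    Sum.elim q (Sum.elim (fun _ => 0)
      (Sum.elim (Sum.elim g (fun k => -(g k))) (fun _ => 0))) with hQ
  by_cases hsolv : ∃ ξ : (ι ⊕ κ) → ℚ, ∀ J, Q J ≤ dotp (P J) ξ
  · obtain ⟨ξ, hξ⟩ := hsolv
    set x := ξ ∘ Sum.inl with hx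
    set lam := ξ ∘ Sum.inr with hlam
    have h1 : ∀ j, q j ≤ dotp (p j) x := by
      intro j
      have := hξ (Sum.inl j)
      simpa [hP, hQ, dotp_elim] using this
    have h2 : ∀ j, 0 ≤ lam j := by
      intro j
      have := hξ (Sum.inr (Sum.inl j))
      simpa [hP, hQ, dotp_elim, dotp_single, hlam] using this
    have h3 : ∀ k, dotp (fun j => p j k) lam = g k := by
      intro k
      have ha := hξ (Sum.inr (Sum.inr (Sum.inl (Sum.inl k))))
      have hb := hξ (Sum.inr (Sum.inr (Sum.inl (Sum.inr k))))
      simp only [hP, hQ, Sum.elim_inl, Sum.elim_inr, dotp_elim, dotp_zero_left,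
        zero_add] at ha hb
      apply le_antisymm _ ha
      have hb' : dotp (fun j => -(p j k)) lam = - dotp (fun j => p j k) lam := by
        simp [dotp, neg_mul, Finset.sum_neg_distrib]
      rw [hb'] at hb
      linarith
    have hgl : g = ∑ j, lam j • p j := by
      funext k
      rw [Finset.sum_apply]
      rw [← h3 k]
      unfold dotp
      exact Finset.sum_congr rfl fun j _ => by simp [mul_comm]
    have h5 : dotp g x ≤ ∑ j, lam j * q j := by
      have := hξ (Sum.inr (Sum.inr (Sum.inr ())))
      simp only [hP, hQ, Sum.elim_inl, Sum.elim_inr, dotp_elim] at this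
      rw [dotp_neg_left] at this
      have hql : dotp q lam = ∑ j, lam j * q j := by
        unfold dotp; exact Finset.sum_congr rfl fun j _ => by ring
      rw [hql] at this
      linarith
    have hweak : ∑ j, lam j * q j ≤ dotp g x := by
      rw [hgl, dotp_sum_left]
      exact Finset.sum_le_sum fun j _ => mul_le_mul_of_nonneg_left (h1 j) (h2 j)
    exact ⟨x, lam, h1, h2, hgl, le_antisymm h5 hweak⟩
  · exfalso
    obtain ⟨M, hM, hsum, hq⟩ := farkas_affine P Q hsolv
    set μ : κ → ℚ := fun j => M (Sum.inl j) with hμdef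
    set ν : κ → ℚ := fun j => M (Sum.inr (Sum.inl j)) with hνdef
    set sp : ι → ℚ := fun k => M (Sum.inr (Sum.inr (Sum.inl (Sum.inl k)))) with hspdef
    set sm : ι → ℚ := fun k => M (Sum.inr (Sum.inr (Sum.inl (Sum.inr k)))) with hsmdef
    set σc : ℚ := M (Sum.inr (Sum.inr (Sum.inr ()))) with hσdef
    set h : ι → ℚ := fun k => sp k - sm k with hhdef
    have hstar : ∀ i, ∑ j, μ j * p j i = σc * g i := by
      intro i
      have h0 := congrFun hsum (Sum.inl i)
      simp only [Finset.sum_apply, Pi.smul_apply, smul_eq_mul, Fintype.sum_sum_type,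
        hP, Sum.elim_inl, Sum.elim_inr, Pi.zero_apply, Pi.neg_apply, mul_zero,
        Finset.sum_const_zero, add_zero, zero_add, Finset.univ_unique,
        Finset.sum_singleton, Pi.ofNat_apply] at h0
      linarith [h0]
    have hdstar : ∀ j, ν j + dotp (p j) h + σc * q j = 0 := by
      intro j
      have h0 := congrFun hsum (Sum.inr j)
      simp only [Finset.sum_apply, Pi.smul_apply, smul_eq_mul, Fintype.sum_sum_type,
        hP, Sum.elim_inl, Sum.elim_inr, Pi.zero_apply, mul_zero,
        Finset.sum_const_zero, add_zero, zero_add, Finset.univ_unique,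
        Finset.sum_singleton, Pi.single_apply, mul_ite, mul_one,
        Finset.sum_ite_eq', Finset.sum_ite_eq, Finset.mem_univ, if_true] at h0
      have hde : M (Sum.inr (Sum.inr (Sum.inr default))) = σc := rfl
      have hsp : (∑ x : ι, M (Sum.inr (Sum.inr (Sum.inl (Sum.inl x)))) * p j x)
          = ∑ k, sp k * p j k := rfl
      have hh : dotp (p j) h = (∑ k, sp k * p j k) - ∑ k, sm k * p j k := by
        unfold dotp
        rw [← Finset.sum_sub_distrib]
        exact Finset.sum_congr rfl fun k _ => by rw [hhdef]; ring
      have hneg : ∑ k, sm k * -(p j k) = - ∑ k, sm k * p j k := by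
        rw [← Finset.sum_neg_distrib]
        exact Finset.sum_congr rfl fun k _ => by ring
      rw [hh]
      rw [hneg] at h0
      linarith [h0, hde, hsp]
    have hq' : 0 < (∑ j, μ j * q j) + dotp g h := by
      simp only [Fintype.sum_sum_type, hQ, Sum.elim_inl, Sum.elim_inr, mul_zero,
        Finset.sum_const_zero, add_zero, zero_add, Finset.univ_unique,
        Finset.sum_singleton] at hq
      have hh : dotp g h = (∑ k, sp k * g k) - ∑ k, sm k * g k := by
        unfold dotp
        rw [← Finset.sum_sub_distrib]
        exact Finset.sum_congr rfl fun k _ => by rw [hhdef]; ring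
      have hneg : ∑ k, sm k * -(g k) = - ∑ k, sm k * g k := by
        rw [← Finset.sum_neg_distrib]
        exact Finset.sum_congr rfl fun k _ => by ring
      rw [hh]
      rw [hneg] at hq
      linarith [hq]
    rcases eq_or_lt_of_le (hM (Sum.inr (Sum.inr (Sum.inr ())))) with hσ | hσ
    · -- σc = 0
      have hσ0 : σc = 0 := hσ.symm
      have hμ0 : (∑ j, μ j • p j) = (0 : ι → ℚ) := by
        funext i
        rw [Finset.sum_apply]
        simp only [Pi.smul_apply, smul_eq_mul, Pi.zero_apply]
        rw [hstar i, hσ0, zero_mul]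
      have e1 : ∑ j, μ j * q j ≤ 0 := by
        have hdp := dotp_sum_left μ p x₀
        rw [hμ0, dotp_zero_left] at hdp
        have : ∑ j, μ j * q j ≤ ∑ j, μ j * dotp (p j) x₀ :=
          Finset.sum_le_sum fun j _ => mul_le_mul_of_nonneg_left (hx₀ j) (hM (Sum.inl j))
        linarith [this, hdp]
      have e2 : dotp g h ≤ 0 := by
        rw [hg, dotp_sum_left]
        apply Finset.sum_nonpos
        intro j _
        apply mul_nonpos_of_nonneg_of_nonpos (hlam0 j)
        have := hdstar j
        have := hM (Sum.inr (Sum.inl j))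
        rw [hσ0] at *
        linarith
      linarith [hq', e1, e2]
    · -- σc > 0
      set x' : ι → ℚ := (-(σc⁻¹)) • h with hx'def
      have hσne : σc ≠ 0 := ne_of_gt hσ
      have feas' : ∀ j, q j ≤ dotp (p j) x' := by
        intro j
        have key : σc * q j ≤ - dotp (p j) h := by
          have := hdstar j
          have := hM (Sum.inr (Sum.inl j))
          linarith
        rw [hx'def, dotp_smul_right]
        calc q j = σc⁻¹ * (σc * q j) := by field_simp
          _ ≤ σc⁻¹ * (- dotp (p j) h) :=
              mul_le_mul_of_nonneg_left key (le_of_lt (inv_pos.2 hσ))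
          _ = -σc⁻¹ * dotp (p j) h := by ring
      have hsg : (∑ j, μ j • p j) = σc • g := by
        funext i
        rw [Finset.sum_apply]
        simp only [Pi.smul_apply, smul_eq_mul]
        exact hstar i
      have hwd : ∑ j, μ j * q j ≤ σc * dotp g x' := by
        have e3 : ∑ j, μ j * dotp (p j) x' = σc * dotp g x' := by
          rw [← dotp_sum_left, hsg, dotp_smul_left]
        have : ∑ j, μ j * q j ≤ ∑ j, μ j * dotp (p j) x' :=
          Finset.sum_le_sum fun j _ => mul_le_mul_of_nonneg_left (feas' j) (hM (Sum.inl j))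
        linarith
      have hval : σc * dotp g x' = - dotp g h := by
        rw [hx'def, dotp_smul_right]
        field_simp
      linarith [hq', hwd, hval]

theorem exists_kkt {κ : Type*} [Fintype κ] (p : κ → ι → ℚ) (q : κ → ℚ) (g : ι → ℚ)
    (x₁ : ι → ℚ) (hfeas : ∀ j, q j ≤ dotp (p j) x₁)
    (hmin : ∀ y, (∀ j, q j ≤ dotp (p j) y) → dotp g x₁ ≤ dotp g y) :
    ∃ ν : κ → ℚ, (∀ j, 0 ≤ ν j) ∧ g = ∑ j, ν j • p j ∧
      ∀ j, ν j ≠ 0 → dotp (p j) x₁ = q j := by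
  classical
  set p' : κ → ι → ℚ := fun j => if dotp (p j) x₁ = q j then p j else 0 with hp'
  rcases farkas p' g with ⟨l, hl, hg⟩ | ⟨z, hz, hgz⟩
  · refine ⟨fun j => if dotp (p j) x₁ = q j then l j else 0, ?_, ?_, ?_⟩
    · intro j; dsimp only; split
      · exact hl j
      · exact le_refl 0
    · rw [hg]
      refine Finset.sum_congr rfl fun j _ => ?_
      rw [hp']
      by_cases hj : dotp (p j) x₁ = q j <;> simp [hj]
    · intro j hj
      by_contra hnt
      apply hj
      simp [hnt]
  · exfalso
    set s := Finset.univ.filter (fun j => dotp (p j) z < 0) with hs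
    have slackpos : ∀ j ∈ s, 0 < dotp (p j) x₁ - q j := by
      intro j hjs
      rw [hs, Finset.mem_filter] at hjs
      rcases lt_or_eq_of_le (hfeas j) with hlt | heq
      · linarith
      · exfalso
        have := hz j
        rw [hp'] at this
        simp only [heq.symm, if_true] at this
        linarith [hjs.2]
    by_cases hsne : s.Nonempty
    · set t := s.inf' hsne (fun j => (dotp (p j) x₁ - q j) / (-(dotp (p j) z))) with ht
      have htpos : 0 < t := by
        rw [ht, Finset.lt_inf'_iff]
        intro j hjs
        have h1 := slackpos j hjs
        rw [hs, Finset.mem_filter] at hjs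
        exact div_pos h1 (by linarith [hjs.2])
      have hfeas' : ∀ j, q j ≤ dotp (p j) (x₁ + t • z) := by
        intro j
        rw [dotp_add_right, dotp_smul_right]
        by_cases hdj : 0 ≤ dotp (p j) z
        · have : 0 ≤ t * dotp (p j) z := mul_nonneg (le_of_lt htpos) hdj
          linarith [hfeas j]
        · push_neg at hdj
          have hjs : j ∈ s := by rw [hs, Finset.mem_filter]; exact ⟨Finset.mem_univ j, hdj⟩
          have hle : t ≤ (dotp (p j) x₁ - q j) / (-(dotp (p j) z)) :=
            Finset.inf'_le _ hjs
          rw [le_div_iff₀ (by linarith : (0:ℚ) < -(dotp (p j) z))] at hle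
          nlinarith [hle]
      have := hmin _ (hfeas')
      rw [dotp_add_right, dotp_smul_right] at this
      nlinarith [mul_neg_of_pos_of_neg htpos hgz]
    · -- all directions are nonneg: z is a recession direction for every constraint
      have hfeas' : ∀ j, q j ≤ dotp (p j) (x₁ + (1:ℚ) • z) := by
        intro j
        rw [dotp_add_right, dotp_smul_right]
        have : ¬ dotp (p j) z < 0 := by
          intro hneg
          exact hsne ⟨j, by rw [hs, Finset.mem_filter]; exact ⟨Finset.mem_univ j, hneg⟩⟩
        push_neg at this
        linarith [hfeas j]
      have := hmin _ hfeas'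
      rw [dotp_add_right, dotp_smul_right] at this
      linarith

section Key
variable {σ τ : Type*} [Fintype σ] [Fintype τ]

theorem comp_inl_sum {r : ℕ} (a : Fin r → (σ ⊕ τ) → ℚ) (lam : Fin r → ℚ) :
    (∑ i, lam i • a i) ∘ Sum.inl = ∑ i, lam i • (a i ∘ Sum.inl) := by
  funext k
  simp [Finset.sum_apply]

theorem comp_inr_sum {r : ℕ} (a : Fin r → (σ ⊕ τ) → ℚ) (lam : Fin r → ℚ) :
    (∑ i, lam i • a i) ∘ Sum.inr = ∑ i, lam i • (a i ∘ Sum.inr) := by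
  funext k
  simp [Finset.sum_apply]

theorem elim_comp_self (u : (σ ⊕ τ) → ℚ) :
    Sum.elim (u ∘ Sum.inl) (u ∘ Sum.inr) = u := by
  funext x; cases x <;> rfl

theorem elim_eq_sum {r : ℕ} (a : Fin r → (σ ⊕ τ) → ℚ) (lam : Fin r → ℚ)
    (w : σ → ℚ) (hw : w = ∑ i, lam i • (a i ∘ Sum.inl)) :
    Sum.elim w (∑ i, lam i • (a i ∘ Sum.inr)) = ∑ i, lam i • a i := by
  rw [← elim_comp_self (∑ i, lam i • a i), comp_inl_sum, comp_inr_sum, hw]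

theorem comb_sub {r : ℕ} (a : Fin r → (σ ⊕ τ) → ℚ) (lam mu : Fin r → ℚ) (eps : ℚ) :
    (∑ i, lam i • a i) - eps • (∑ i, mu i • a i) = ∑ i, (lam i - eps * mu i) • a i := by
  funext x
  simp only [Pi.sub_apply, Pi.smul_apply, Finset.sum_apply, smul_eq_mul, Finset.mul_sum,
    ← Finset.sum_sub_distrib]
  exact Finset.sum_congr rfl fun i _ => by ring

theorem dotp_sum_plain {κ : Type*} [Fintype κ] (x : ι → ℚ) (f : κ → ι → ℚ) :
    dotp x (∑ j, f j) = ∑ j, dotp x (f j) := by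
  have := dotp_sum_right x (fun _ => (1:ℚ)) f
  simpa using this

theorem key_lemma {r : ℕ}
    (a : Fin r → (σ ⊕ τ) → ℚ) (v : τ → ℚ) (x₀ : σ → ℚ)
    (hx₀ : ∀ i, 0 ≤ dotp (a i) (Sum.elim x₀ v))
    (w : σ → ℚ) (lam0 : Fin r → ℚ) (hlam0 : ∀ i, 0 ≤ lam0 i)
    (hw : w = ∑ i, lam0 i • (a i ∘ Sum.inl)) :
    (faceOf {x' : σ → ℚ | Sum.elim x' v ∈ {x : (σ ⊕ τ) → ℚ | ∀ i, 0 ≤ dotp (a i) x}} w).Nonempty ∧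
    ∃ G, IsSmallestFaceContaining (dualCone {x : (σ ⊕ τ) → ℚ | ∀ i, 0 ≤ dotp (a i) x})
        {u : (σ ⊕ τ) → ℚ |
          u ∘ Sum.inr ∈ faceOf {y : τ → ℚ |
            Sum.elim w y ∈ dualCone {x : (σ ⊕ τ) → ℚ | ∀ i, 0 ≤ dotp (a i) x}} v ∧
            u ∘ Sum.inl = w} G ∧
      (fun u : (σ ⊕ τ) → ℚ => u ∘ Sum.inl) '' G
        = normalCone {x' : σ → ℚ | Sum.elim x' v ∈ {x : (σ ⊕ τ) → ℚ | ∀ i, 0 ≤ dotp (a i) x}}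
            (faceOf {x' : σ → ℚ | Sum.elim x' v ∈ {x : (σ ⊕ τ) → ℚ | ∀ i, 0 ≤ dotp (a i) x}} w) := by
  classical
  set Cset : Set ((σ ⊕ τ) → ℚ) := {x | ∀ i, 0 ≤ dotp (a i) x} with hCsetdef
  set b : Fin r → σ → ℚ := fun i => a i ∘ Sum.inl with hbdef
  set c : Fin r → τ → ℚ := fun i => a i ∘ Sum.inr with hcdef
  set qq : Fin r → ℚ := fun i => -(dotp (c i) v) with hqqdef
  set Cv : Set (σ → ℚ) := {x' | Sum.elim x' v ∈ Cset} with hCvdef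
  -- splitting of the pairing
  have hsplit : ∀ (i : Fin r) (x' : σ → ℚ),
      dotp (a i) (Sum.elim x' v) = dotp (b i) x' + dotp (c i) v := by
    intro i x'
    rw [dotp_sumElim_split]
    simp [hbdef, hcdef, dotp_comm]
  have hmemCv : ∀ x' : σ → ℚ, x' ∈ Cv ↔ ∀ i, qq i ≤ dotp (b i) x' := by
    intro x'
    constructor
    · intro hx i
      have := hx i
      rw [hsplit i x'] at this
      simp only [hqqdef]
      linarith
    · intro hx i
      show (0:ℚ) ≤ dotp (a i) (Sum.elim x' v)
      rw [hsplit i x']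
      have := hx i
      simp only [hqqdef] at this
      linarith
  have hx₀Cv : ∀ i, qq i ≤ dotp (b i) x₀ := (hmemCv x₀).1 (fun i => hx₀ i)
  -- solve the LP
  obtain ⟨xs, lams, hxs, hlams, hwls, hvaleq⟩ :=
    lp_master b qq w x₀ hx₀Cv lam0 hlam0 hw
  set opt := dotp w xs with hoptdef
  -- weak duality
  have hwd : ∀ lam : Fin r → ℚ, (∀ i, 0 ≤ lam i) → w = ∑ i, lam i • b i →
      ∀ x' : σ → ℚ, (∀ i, qq i ≤ dotp (b i) x') → ∑ i, lam i * qq i ≤ dotp w x' := by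
    intro lam h0 hrep x' hx'
    rw [hrep, dotp_sum_left]
    exact Finset.sum_le_sum fun i _ => mul_le_mul_of_nonneg_left (hx' i) (h0 i)
  have hcomp : ∀ lam : Fin r → ℚ, w = ∑ j, lam j • b j → ∀ k, ∑ j, lam j * b j k = w k := by
    intro lam hrep k
    have h0 := congrFun hrep k
    rw [Finset.sum_apply] at h0
    simp only [Pi.smul_apply, smul_eq_mul] at h0
    linarith
  have hxsmin : ∀ y ∈ Cv, opt ≤ dotp w y := by
    intro y hy
    rw [hvaleq]
    exact hwd lams hlams hwls y ((hmemCv y).1 hy)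
  have hxsF : xs ∈ faceOf Cv w := by
    refine ⟨(hmemCv xs).2 hxs, fun y hy => hxsmin y hy⟩
  have hFchar : ∀ x, x ∈ faceOf Cv w ↔ (x ∈ Cv ∧ dotp w x = opt) := by
    intro x
    constructor
    · intro hx
      exact ⟨hx.1, le_antisymm (hx.2 xs hxsF.1) (hxsmin x hx.1)⟩
    · rintro ⟨hx1, hx2⟩
      exact ⟨hx1, fun y hy => by rw [hx2]; exact hxsmin y hy⟩
  set J : Fin r → Prop := fun i => ∀ x ∈ faceOf Cv w, dotp (b i) x = qq i with hJdef
  set Dopt : (Fin r → ℚ) → Prop := fun lam =>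
    (∀ i, 0 ≤ lam i) ∧ w = ∑ i, lam i • b i ∧ ∑ i, lam i * qq i = opt with hDoptdef
  have hDoptlams : Dopt lams := ⟨hlams, hwls, hvaleq.symm⟩
  have hcs : ∀ lam, Dopt lam → ∀ x ∈ faceOf Cv w, ∀ i, lam i * (dotp (b i) x - qq i) = 0 := by
    rintro lam ⟨hl1, hl2, hl3⟩ x hx i
    have hxCv : ∀ i', qq i' ≤ dotp (b i') x := (hmemCv x).1 hx.1
    have hvx : dotp w x = opt := ((hFchar x).1 hx).2
    have hsum0 : ∑ i', lam i' * (dotp (b i') x - qq i') = 0 := by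
      have expand : ∑ i', lam i' * (dotp (b i') x - qq i')
          = (∑ i', lam i' * dotp (b i') x) - ∑ i', lam i' * qq i' := by
        rw [← Finset.sum_sub_distrib]
        exact Finset.sum_congr rfl fun _ _ => by ring
      have hdw : ∑ i', lam i' * dotp (b i') x = dotp w x := by rw [hl2, dotp_sum_left]
      rw [expand, hdw, hvx, hl3, sub_self]
    have hnn : ∀ i' ∈ Finset.univ, 0 ≤ lam i' * (dotp (b i') x - qq i') :=
      fun i' _ => mul_nonneg (hl1 i') (by linarith [hxCv i'])
    exact (Finset.sum_eq_zero_iff_of_nonneg hnn).1 hsum0 i (Finset.mem_univ i)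
  have hsupp : ∀ lam, Dopt lam → ∀ i, lam i ≠ 0 → J i := by
    intro lam hD i hi x hx
    have := hcs lam hD x hx i
    rcases mul_eq_zero.1 this with h | h
    · exact absurd h hi
    · linarith
  have hsuppD : ∀ lam : Fin r → ℚ, (∀ i, 0 ≤ lam i) → w = ∑ i, lam i • b i →
      (∀ i, lam i ≠ 0 → J i) → Dopt lam := by
    intro lam h0 hrep hsp
    refine ⟨h0, hrep, ?_⟩
    have : ∑ i, lam i * qq i = ∑ i, lam i * dotp (b i) xs := by
      refine Finset.sum_congr rfl fun i _ => ?_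
      by_cases hi : lam i = 0
      · simp [hi]
      · rw [hsp i hi xs hxsF]
    rw [this, ← dotp_sum_left, ← hrep]
  -- a point of the face with exact tightness pattern J
  have hpick : ∀ i : Fin r, ∃ x, x ∈ faceOf Cv w ∧ qq i ≤ dotp (b i) x ∧
      (¬ J i → qq i < dotp (b i) x) := by
    intro i
    by_cases hJ : J i
    · exact ⟨xs, hxsF, hxs i, fun h => absurd hJ h⟩
    · simp only [hJdef] at hJ
      push_neg at hJ
      obtain ⟨x, hxF, hne⟩ := hJ
      have hge : qq i ≤ dotp (b i) x := (hmemCv x).1 hxF.1 i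
      exact ⟨x, hxF, hge, fun _ => lt_of_le_of_ne hge (Ne.symm hne)⟩
  choose y hyF hyge hygt using hpick
  set xh : σ → ℚ := ((r:ℚ)+1)⁻¹ • (xs + ∑ i, y i) with hxhdef
  have hr1 : (0:ℚ) < (r:ℚ)+1 := by positivity
  have hdotxh : ∀ u : σ → ℚ, dotp u xh = ((r:ℚ)+1)⁻¹ * (dotp u xs + ∑ i, dotp u (y i)) := by
    intro u
    rw [hxhdef, dotp_smul_right, dotp_add_right, dotp_sum_plain]
  have hxhCv : ∀ i, qq i ≤ dotp (b i) xh := by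
    intro i
    have hsum : qq i * ((r:ℚ)+1) ≤ dotp (b i) xs + ∑ j, dotp (b i) (y j) := by
      have h1 : ∑ _j : Fin r, qq i ≤ ∑ j, dotp (b i) (y j) :=
        Finset.sum_le_sum fun j _ => (hmemCv (y j)).1 (hyF j).1 i
      have h2 : ∑ _j : Fin r, qq i = (r:ℚ) * qq i := by
        rw [Finset.sum_const, Finset.card_univ, Fintype.card_fin, nsmul_eq_mul]
      have h3 := hxs i
      rw [h2] at h1
      nlinarith [h1, h3]
    calc qq i = ((r:ℚ)+1)⁻¹ * (qq i * ((r:ℚ)+1)) := by field_simp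
      _ ≤ ((r:ℚ)+1)⁻¹ * (dotp (b i) xs + ∑ j, dotp (b i) (y j)) :=
          mul_le_mul_of_nonneg_left hsum (le_of_lt (inv_pos.2 hr1))
      _ = dotp (b i) xh := (hdotxh (b i)).symm
  have hxhval : dotp w xh = opt := by
    rw [hdotxh w]
    have h1 : ∑ j, dotp w (y j) = (r:ℚ) * opt := by
      have : ∀ j ∈ Finset.univ, dotp w (y j) = opt := fun j _ => ((hFchar (y j)).1 (hyF j)).2
      rw [Finset.sum_congr rfl this, Finset.sum_const, Finset.card_univ, Fintype.card_fin,
        nsmul_eq_mul]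
    rw [h1]
    field_simp
    ring
  have hxhF : xh ∈ faceOf Cv w := (hFchar xh).2 ⟨(hmemCv xh).2 hxhCv, hxhval⟩
  have hxh_slack : ∀ i, ¬ J i → qq i < dotp (b i) xh := by
    intro i hJ
    have hstrict : qq i * ((r:ℚ)+1) < dotp (b i) xs + ∑ j, dotp (b i) (y j) := by
      have h1 : ∑ _j : Fin r, qq i < ∑ j, dotp (b i) (y j) := by
        apply Finset.sum_lt_sum (fun j _ => (hmemCv (y j)).1 (hyF j).1 i)
        exact ⟨i, Finset.mem_univ i, hygt i hJ⟩
      have h2 : ∑ _j : Fin r, qq i = (r:ℚ) * qq i := by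
        rw [Finset.sum_const, Finset.card_univ, Fintype.card_fin, nsmul_eq_mul]
      have h3 := hxs i
      rw [h2] at h1
      nlinarith [h1, h3]
    calc qq i = ((r:ℚ)+1)⁻¹ * (qq i * ((r:ℚ)+1)) := by field_simp
      _ < ((r:ℚ)+1)⁻¹ * (dotp (b i) xs + ∑ j, dotp (b i) (y j)) := by
          apply mul_lt_mul_of_pos_left hstrict (inv_pos.2 hr1)
      _ = dotp (b i) xh := (hdotxh (b i)).symm
  have hxh_tight : ∀ i, J i → dotp (b i) xh = qq i := fun i hJ => hJ xh hxhF
  -- characterization of the normal cone of the face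
  have hAchar : normalCone Cv (faceOf Cv w)
      = {w'' | ∃ nu : Fin r → ℚ, (∀ i, 0 ≤ nu i) ∧ (∀ i, nu i ≠ 0 → J i) ∧
          w'' = ∑ i, nu i • b i} := by
    ext w''
    constructor
    · intro hmem
      have hxhmin : xh ∈ faceOf Cv w'' := hmem hxhF
      obtain ⟨nu, hnu0, hnuw, hnut⟩ := exists_kkt b qq w'' xh
        ((hmemCv xh).1 hxhmin.1)
        (fun y' hy' => hxhmin.2 y' ((hmemCv y').2 hy'))
      refine ⟨nu, hnu0, fun i hi => ?_, hnuw⟩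
      by_contra hJn
      exact absurd (hnut i hi) (ne_of_gt (hxh_slack i hJn))
    · rintro ⟨nu, hnu0, hnusupp, hnuw⟩ x hx
      refine ⟨hx.1, fun y' hy' => ?_⟩
      rw [hnuw, dotp_sum_left, dotp_sum_left]
      refine Finset.sum_le_sum fun i _ => ?_
      by_cases hni : nu i = 0
      · simp [hni]
      · have htx : dotp (b i) x = qq i := hnusupp i hni x hx
        have hty : qq i ≤ dotp (b i) y' := (hmemCv y').1 hy' i
        rw [htx]
        exact mul_le_mul_of_nonneg_left hty (hnu0 i)
  -- characterization of the dual cone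
  have hdualchar : dualCone Cset
      = {u | ∃ lam : Fin r → ℚ, (∀ i, 0 ≤ lam i) ∧ u = ∑ i, lam i • a i} := by
    ext u
    constructor
    · intro hu
      rcases farkas a u with h | ⟨z, hz1, hz2⟩
      · obtain ⟨lam, h1, h2⟩ := h
        exact ⟨lam, h1, h2⟩
      · exfalso
        have := hu z hz1
        linarith
    · rintro ⟨lam, h0, rfl⟩ x hx
      rw [dotp_sum_left]
      exact Finset.sum_nonneg fun i _ => mul_nonneg (h0 i) (hx i)
  -- the optimal face as an inequality system (for strict complementarity)
  have hFsys : ∀ x, x ∈ faceOf Cv w ↔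
      ∀ j : Fin r ⊕ Unit, Sum.elim qq (fun _ => -opt) j ≤ dotp (Sum.elim b (fun _ => -w) j) x := by
    intro x
    rw [hFchar]
    constructor
    · rintro ⟨hx1, hx2⟩ j
      cases j with
      | inl j => exact (hmemCv x).1 hx1 j
      | inr _ =>
        simp only [Sum.elim_inr]
        rw [dotp_neg_left, hx2]
    · intro hj
      have hx1 : x ∈ Cv := (hmemCv x).2 fun i => hj (Sum.inl i)
      refine ⟨hx1, ?_⟩
      have h1 := hj (Sum.inr ())
      simp only [Sum.elim_inr] at h1
      rw [dotp_neg_left] at h1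
      have h2 := hxsmin x hx1
      linarith
  have hstrict : ∀ i, J i → ∃ lam, Dopt lam ∧ 0 < lam i := by
    intro i hJi
    obtain ⟨nu, hnu0, hrepr, hnut⟩ := exists_kkt (Sum.elim b (fun _ => -w))
      (Sum.elim qq (fun _ => -opt)) (-(b i)) xh ((hFsys xh).1 hxhF)
      (fun y' hy' => by
        have hy'F : y' ∈ faceOf Cv w := (hFsys y').2 hy'
        rw [dotp_neg_left, dotp_neg_left, hJi xh hxhF, hJi y' hy'F])
    have hsplitsum : -(b i) = (∑ j, nu (Sum.inl j) • b j) + nu (Sum.inr ()) • (-w) := by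
      rw [hrepr, Fintype.sum_sum_type]
      simp
    have hnusupp : ∀ j, nu (Sum.inl j) ≠ 0 → J j := by
      intro j hj
      have := hnut (Sum.inl j) hj
      simp only [Sum.elim_inl] at this
      by_contra hJn
      exact absurd this (ne_of_gt (hxh_slack j hJn))
    by_cases htc : nu (Sum.inr ()) = 0
    · -- the last multiplier vanishes
      have hcoord0 : ∀ k, b i k + ∑ j, nu (Sum.inl j) * b j k = 0 := by
        intro k
        have h0 := congrFun hsplitsum k
        rw [htc] at h0
        simp only [Pi.add_apply, Pi.neg_apply, Pi.smul_apply, smul_eq_mul,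
          Finset.sum_apply, zero_mul, add_zero, zero_smul, Pi.zero_apply] at h0
        linarith
      set lam' : Fin r → ℚ := fun j => lams j + ((if j = i then (1:ℚ) else 0) + nu (Sum.inl j))
        with hlam'def
      have h0' : ∀ j, 0 ≤ lam' j := by
        intro j
        rw [hlam'def]
        have : (0:ℚ) ≤ if j = i then (1:ℚ) else 0 := by split <;> norm_num
        have := hlams j
        have := hnu0 (Sum.inl j)
        dsimp only
        linarith
      have hrep' : w = ∑ j, lam' j • b j := by
        funext k
        rw [Finset.sum_apply]
        have e0 : ∀ j ∈ Finset.univ, (lam' j • b j) k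
            = lams j * b j k + ((if j = i then b j k else 0) + nu (Sum.inl j) * b j k) := by
          intro j _
          simp only [hlam'def, Pi.smul_apply, smul_eq_mul]
          split <;> ring
        rw [Finset.sum_congr rfl e0, Finset.sum_add_distrib, Finset.sum_add_distrib,
          Finset.sum_ite_eq' Finset.univ i (fun j => b j k)]
        simp only [Finset.mem_univ, if_true]
        have := hcomp lams hwls k
        have := hcoord0 k
        linarith
      have hsupp' : ∀ j, lam' j ≠ 0 → J j := by
        intro j hj
        by_contra hJn
        apply hj
        rw [hlam'def]
        have h1 : lams j = 0 := by
          by_contra h; exact hJn (hsupp lams hDoptlams j h)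
        have h2 : j ≠ i := fun he => hJn (he ▸ hJi)
        have h3 : nu (Sum.inl j) = 0 := by
          by_contra h; exact hJn (hnusupp j h)
        simp [h1, h2, h3]
      refine ⟨lam', hsuppD lam' h0' hrep' hsupp', ?_⟩
      rw [hlam'def]
      have := hlams i
      have := hnu0 (Sum.inl i)
      simp only [eq_self_iff_true, if_true]
      linarith
    · -- the last multiplier is positive
      have htcpos : 0 < nu (Sum.inr ()) := lt_of_le_of_ne (hnu0 (Sum.inr ())) (Ne.symm htc)
      have hcoord : ∀ k, b i k + ∑ j, nu (Sum.inl j) * b j k = nu (Sum.inr ()) * w k := by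
        intro k
        have h0 := congrFun hsplitsum k
        simp only [Pi.add_apply, Pi.neg_apply, Pi.smul_apply, smul_eq_mul,
          Finset.sum_apply, mul_neg, Pi.zero_apply] at h0
        linarith
      set lam' : Fin r → ℚ :=
        fun j => (nu (Sum.inr ()))⁻¹ * ((if j = i then (1:ℚ) else 0) + nu (Sum.inl j))
        with hlam'def
      have h0' : ∀ j, 0 ≤ lam' j := by
        intro j
        rw [hlam'def]
        apply mul_nonneg (le_of_lt (inv_pos.2 htcpos))
        have : (0:ℚ) ≤ if j = i then (1:ℚ) else 0 := by split <;> norm_num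
        have := hnu0 (Sum.inl j)
        linarith
      have hrep' : w = ∑ j, lam' j • b j := by
        funext k
        rw [Finset.sum_apply]
        have e0 : ∀ j ∈ Finset.univ, (lam' j • b j) k
            = (nu (Sum.inr ()))⁻¹ * (((if j = i then (1:ℚ) else 0) + nu (Sum.inl j)) * b j k) := by
          intro j _
          simp only [hlam'def, Pi.smul_apply, smul_eq_mul]
          ring
        rw [Finset.sum_congr rfl e0, ← Finset.mul_sum]
        have e1 : ∑ j, ((if j = i then (1:ℚ) else 0) + nu (Sum.inl j)) * b j k
            = b i k + ∑ j, nu (Sum.inl j) * b j k := by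
          have e2 : ∀ j ∈ Finset.univ, ((if j = i then (1:ℚ) else 0) + nu (Sum.inl j)) * b j k
              = (if j = i then b j k else 0) + nu (Sum.inl j) * b j k := by
            intro j _; split <;> ring
          rw [Finset.sum_congr rfl e2, Finset.sum_add_distrib,
            Finset.sum_ite_eq' Finset.univ i (fun j => b j k)]
          simp
        rw [e1, hcoord k]
        field_simp
      have hsupp' : ∀ j, lam' j ≠ 0 → J j := by
        intro j hj
        by_contra hJn
        apply hj
        rw [hlam'def]
        have h2 : j ≠ i := fun he => hJn (he ▸ hJi)
        have h3 : nu (Sum.inl j) = 0 := by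
          by_contra h; exact hJn (hnusupp j h)
        simp [h2, h3]
      refine ⟨lam', hsuppD lam' h0' hrep' hsupp', ?_⟩
      rw [hlam'def]
      apply mul_pos (inv_pos.2 htcpos)
      have := hnu0 (Sum.inl i)
      simp only [eq_self_iff_true, if_true]
      linarith
  -- a dual optimal solution with full support on J
  have hpickdual : ∀ i : Fin r, ∃ lam, Dopt lam ∧ (J i → 0 < lam i) := by
    intro i
    by_cases hJ : J i
    · obtain ⟨lam, h1, h2⟩ := hstrict i hJ
      exact ⟨lam, h1, fun _ => h2⟩
    · exact ⟨lams, hDoptlams, fun h => absurd h hJ⟩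
  choose ld hld1 hld3 using hpickdual
  set lamh : Fin r → ℚ := fun j => ((r:ℚ)+1)⁻¹ * (lams j + ∑ i, ld i j) with hlamhdef
  have hlamh0 : ∀ j, 0 ≤ lamh j := by
    intro j
    rw [hlamhdef]
    apply mul_nonneg (le_of_lt (inv_pos.2 hr1))
    exact add_nonneg (hlams j) (Finset.sum_nonneg fun i _ => (hld1 i).1 j)
  have hlamhw : w = ∑ j, lamh j • b j := by
    funext k
    rw [Finset.sum_apply]
    have e0 : ∀ j ∈ Finset.univ, (lamh j • b j) k
        = ((r:ℚ)+1)⁻¹ * ((lams j + ∑ i, ld i j) * b j k) := by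
      intro j _
      simp only [hlamhdef, Pi.smul_apply, smul_eq_mul]
      ring
    rw [Finset.sum_congr rfl e0, ← Finset.mul_sum]
    have e1 : ∑ j, (lams j + ∑ i, ld i j) * b j k
        = (∑ j, lams j * b j k) + ∑ i, ∑ j, ld i j * b j k := by
      have e2 : ∀ j ∈ Finset.univ, (lams j + ∑ i, ld i j) * b j k
          = lams j * b j k + ∑ i, ld i j * b j k := by
        intro j _
        rw [add_mul, Finset.sum_mul]
      rw [Finset.sum_congr rfl e2, Finset.sum_add_distrib, Finset.sum_comm]
    have e3 : ∀ i ∈ Finset.univ, ∑ j, ld i j * b j k = w k :=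
      fun i _ => hcomp (ld i) (hld1 i).2.1 k
    rw [e1, hcomp lams hwls k, Finset.sum_congr rfl e3, Finset.sum_const, Finset.card_univ,
      Fintype.card_fin, nsmul_eq_mul]
    field_simp
    ring
  have hlamhsupp : ∀ j, lamh j ≠ 0 → J j := by
    intro j hj
    by_contra hJn
    apply hj
    rw [hlamhdef]
    have h1 : lams j = 0 := by
      by_contra h; exact hJn (hsupp lams hDoptlams j h)
    have h2 : ∀ i, ld i j = 0 := by
      intro i; by_contra h; exact hJn (hsupp (ld i) (hld1 i) j h)
    simp [h1, h2]
  have hDopth : Dopt lamh := hsuppD lamh hlamh0 hlamhw hlamhsupp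
  have hlamhpos : ∀ j, J j → 0 < lamh j := by
    intro j hJ
    rw [hlamhdef]
    apply mul_pos (inv_pos.2 hr1)
    have h1 : 0 < ld j j := hld3 j hJ
    have h2 : ld j j ≤ ∑ i, ld i j :=
      Finset.single_le_sum (fun i _ => (hld1 i).1 j) (Finset.mem_univ j)
    linarith [hlams j]
  -- the dual fiber over w
  set yh : τ → ℚ := ∑ i, lamh i • c i with hyhdef
  have helimrep : ∀ lam : Fin r → ℚ, w = ∑ i, lam i • b i →
      Sum.elim w (∑ i, lam i • c i) = ∑ i, lam i • a i := by
    intro lam hrep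
    simp only [hbdef] at hrep
    have := elim_eq_sum a lam w hrep
    simp only [hcdef]
    exact this
  have hmemDw : ∀ y : τ → ℚ, (Sum.elim w y ∈ dualCone Cset) ↔
      ∃ lam : Fin r → ℚ, (∀ i, 0 ≤ lam i) ∧ w = ∑ i, lam i • b i ∧ y = ∑ i, lam i • c i := by
    intro y
    constructor
    · intro hy
      rw [hdualchar] at hy
      obtain ⟨lam, h0, hrep⟩ := hy
      have hinl := congrArg (fun u => u ∘ Sum.inl) hrep
      have hinr := congrArg (fun u => u ∘ Sum.inr) hrep
      simp only [Sum.elim_comp_inl, Sum.elim_comp_inr, comp_inl_sum, comp_inr_sum] at hinl hinr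
      refine ⟨lam, h0, ?_, ?_⟩
      · simp only [hbdef]; exact hinl
      · simp only [hcdef]; exact hinr
    · rintro ⟨lam, h0, hrep, rfl⟩
      rw [hdualchar]
      exact ⟨lam, h0, helimrep lam hrep⟩
  have hvalDw : ∀ (y : τ → ℚ) (lam : Fin r → ℚ), y = ∑ i, lam i • c i →
      dotp v y = - ∑ i, lam i * qq i := by
    intro y lam hy
    rw [hy, dotp_sum_right, ← Finset.sum_neg_distrib]
    refine Finset.sum_congr rfl fun i _ => ?_
    simp only [hqqdef]
    rw [dotp_comm]
    ring
  have hyhDw : Sum.elim w yh ∈ dualCone Cset := (hmemDw yh).2 ⟨lamh, hlamh0, hDopth.2.1, hyhdef⟩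
  have hyhval : dotp v yh = -opt := by
    rw [hvalDw yh lamh hyhdef, hDopth.2.2]
  have hminDw : ∀ y : τ → ℚ, Sum.elim w y ∈ dualCone Cset → -opt ≤ dotp v y := by
    intro y hy
    obtain ⟨lam, h0, hrep, hyrep⟩ := (hmemDw y).1 hy
    rw [hvalDw y lam hyrep]
    have := hwd lam h0 hrep xs hxs
    linarith [this, hoptdef]
  have hFvchar : ∀ y : τ → ℚ, y ∈ faceOf {y : τ → ℚ | Sum.elim w y ∈ dualCone Cset} v ↔
      (Sum.elim w y ∈ dualCone Cset ∧ dotp v y = -opt) := by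
    intro y
    constructor
    · intro hy
      refine ⟨hy.1, le_antisymm ?_ (hminDw y hy.1)⟩
      have := hy.2 yh hyhDw
      linarith [this, hyhval]
    · rintro ⟨h1, h2⟩
      refine ⟨h1, fun y' hy' => ?_⟩
      rw [h2]
      exact hminDw y' hy'
  -- the candidate smallest face of the dual cone
  set ush : (σ ⊕ τ) → ℚ := Sum.elim xh v with hushdef
  have hush_slack : ∀ i, dotp ush (a i) = dotp (b i) xh - qq i := by
    intro i
    rw [hushdef, dotp_comm, hsplit i xh]
    simp only [hqqdef]
    ring
  have hushC : ush ∈ Cset := hxhF.1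
  have hdual_add : ∀ z1 z2, z1 ∈ dualCone Cset → z2 ∈ dualCone Cset →
      z1 + z2 ∈ dualCone Cset := by
    intro z1 z2 h1 h2 x hx
    rw [dotp_add_left]
    exact add_nonneg (h1 x hx) (h2 x hx)
  have hzero_dual : (0 : (σ ⊕ τ) → ℚ) ∈ dualCone Cset := by
    intro x hx; simp
  have hmin0 : ∀ z ∈ dualCone Cset, 0 ≤ dotp ush z := by
    intro z hz
    rw [dotp_comm]
    exact hz ush hushC
  have hGchar : ∀ z, z ∈ faceOf (dualCone Cset) ush ↔
      ∃ mu : Fin r → ℚ, (∀ i, 0 ≤ mu i) ∧ (∀ i, mu i ≠ 0 → J i) ∧ z = ∑ i, mu i • a i := by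
    intro z
    constructor
    · rintro ⟨hz1, hz2⟩
      have hval0 : dotp ush z = 0 := by
        have h1 := hz2 0 hzero_dual
        rw [dotp_zero_right] at h1
        exact le_antisymm h1 (hmin0 z hz1)
      rw [hdualchar] at hz1
      obtain ⟨mu, hmu0, rfl⟩ := hz1
      refine ⟨mu, hmu0, ?_, rfl⟩
      intro i hi
      by_contra hJn
      rw [dotp_sum_right] at hval0
      have hterm : ∀ i' ∈ Finset.univ, 0 ≤ mu i' * dotp ush (a i') := by
        intro i' _
        apply mul_nonneg (hmu0 i')
        rw [hush_slack i']
        linarith [hxhCv i']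
      have hzero := (Finset.sum_eq_zero_iff_of_nonneg hterm).1 hval0 i (Finset.mem_univ i)
      rcases mul_eq_zero.1 hzero with h | h
      · exact hi h
      · rw [hush_slack i] at h
        have := hxh_slack i hJn
        linarith
    · rintro ⟨mu, hmu0, hmusupp, rfl⟩
      have hmem : ∑ i, mu i • a i ∈ dualCone Cset := by
        rw [hdualchar]; exact ⟨mu, hmu0, rfl⟩
      refine ⟨hmem, fun z' hz' => ?_⟩
      have hval0 : dotp ush (∑ i, mu i • a i) = 0 := by
        rw [dotp_sum_right]
        apply Finset.sum_eq_zero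
        intro i _
        by_cases hi : mu i = 0
        · simp [hi]
        · rw [hush_slack i, hmusupp i hi xh hxhF]
          simp
      rw [hval0]
      exact hmin0 z' hz'
  set T : Set ((σ ⊕ τ) → ℚ) := {u : (σ ⊕ τ) → ℚ |
      u ∘ Sum.inr ∈ faceOf {y : τ → ℚ | Sum.elim w y ∈ dualCone Cset} v ∧ u ∘ Sum.inl = w}
    with hTdef
  have hTchar : ∀ u ∈ T, ∃ lam, Dopt lam ∧ u = ∑ i, lam i • a i := by
    rintro u ⟨h1, h2⟩
    obtain ⟨hD, hval⟩ := (hFvchar (u ∘ Sum.inr)).1 h1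
    obtain ⟨lam, h0, hrep, hyrep⟩ := (hmemDw (u ∘ Sum.inr)).1 hD
    have hDoptl : Dopt lam := by
      refine ⟨h0, hrep, ?_⟩
      have := hvalDw (u ∘ Sum.inr) lam hyrep
      rw [this] at hval
      linarith [hval]
    refine ⟨lam, hDoptl, ?_⟩
    rw [← elim_comp_self u, h2, hyrep]
    exact helimrep lam hrep
  have hThu : Sum.elim w yh ∈ T := by
    refine ⟨?_, ?_⟩
    · rw [Sum.elim_comp_inr]
      exact (hFvchar yh).2 ⟨hyhDw, hyhval⟩
    · rw [Sum.elim_comp_inl]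
  have hTG : T ⊆ faceOf (dualCone Cset) ush := by
    intro u hu
    obtain ⟨lam, hD, hrep⟩ := hTchar u hu
    exact (hGchar u).2 ⟨lam, hD.1, hsupp lam hD, hrep⟩
  have hsmul_dual : ∀ (t : ℚ), 0 ≤ t → ∀ z ∈ dualCone Cset, t • z ∈ dualCone Cset := by
    intro t ht z hz x hx
    rw [dotp_smul_left]
    exact mul_nonneg ht (hz x hx)
  have hGmin : ∀ G', IsFaceOf (dualCone Cset) G' → T ⊆ G' →
      faceOf (dualCone Cset) ush ⊆ G' := by
    rintro G' ⟨hne', u', rfl⟩ hTG' z hzG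
    have hpG' : Sum.elim w yh ∈ faceOf (dualCone Cset) u' := hTG' hThu
    obtain ⟨mu, hmu0, hmusupp, hrepz⟩ := (hGchar z).1 hzG
    have hpdual : Sum.elim w yh ∈ dualCone Cset := hpG'.1
    have h1 : 0 ≤ dotp u' z := by
      have := hpG'.2 (Sum.elim w yh + z) (hdual_add _ _ hpdual hzG.1)
      rw [dotp_add_right] at this
      linarith
    set s2 := Finset.univ.filter (fun i => mu i ≠ 0) with hs2
    set eps := if h : s2.Nonempty then s2.inf' h (fun i => lamh i / mu i) else 1 with hepsdef
    have hepspos : 0 < eps := by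
      rw [hepsdef]
      by_cases h : s2.Nonempty
      · rw [dif_pos h, Finset.lt_inf'_iff]
        intro i hi
        rw [hs2, Finset.mem_filter] at hi
        have hmupos : 0 < mu i := lt_of_le_of_ne (hmu0 i) (Ne.symm hi.2)
        exact div_pos (hlamhpos i (hmusupp i hi.2)) hmupos
      · rw [dif_neg h]; exact one_pos
    have hcoefnn : ∀ i, 0 ≤ lamh i - eps * mu i := by
      intro i
      by_cases hmi : mu i = 0
      · rw [hmi, mul_zero, sub_zero]; exact hlamh0 i
      · have hmupos : 0 < mu i := lt_of_le_of_ne (hmu0 i) (Ne.symm hmi)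
        have hmem : i ∈ s2 := by rw [hs2, Finset.mem_filter]; exact ⟨Finset.mem_univ i, hmi⟩
        have hle : eps ≤ lamh i / mu i := by
          rw [hepsdef, dif_pos ⟨i, hmem⟩]
          exact Finset.inf'_le _ hmem
        rw [le_div_iff₀ hmupos] at hle
        linarith
    have hsubdual : Sum.elim w yh - eps • z ∈ dualCone Cset := by
      rw [hyhdef, helimrep lamh hDopth.2.1, hrepz, comb_sub, hdualchar]
      exact ⟨_, fun i => hcoefnn i, rfl⟩
    have h2 : dotp u' z ≤ 0 := by
      have := hpG'.2 (Sum.elim w yh - eps • z) hsubdual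
      rw [dotp_sub_right, dotp_smul_right] at this
      nlinarith [hepspos]
    have hz0 : dotp u' z = 0 := le_antisymm h2 h1
    have hpval0 : dotp u' (Sum.elim w yh) = 0 := by
      have ha := hpG'.2 ((2:ℚ) • Sum.elim w yh) (hsmul_dual 2 (by norm_num) _ hpdual)
      have hb := hpG'.2 (((1:ℚ)/2) • Sum.elim w yh) (hsmul_dual (1/2) (by norm_num) _ hpdual)
      rw [dotp_smul_right] at ha hb
      linarith
    refine ⟨hzG.1, fun z' hz' => ?_⟩
    rw [hz0]
    have := hpG'.2 z' hz'
    rw [hpval0] at this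
    exact this
  have hprojG : (fun u : (σ ⊕ τ) → ℚ => u ∘ Sum.inl) '' (faceOf (dualCone Cset) ush)
      = normalCone Cv (faceOf Cv w) := by
    rw [hAchar]
    ext w''
    constructor
    · rintro ⟨z, hzG, rfl⟩
      obtain ⟨mu, hmu0, hmusupp, rfl⟩ := (hGchar z).1 hzG
      refine ⟨mu, hmu0, hmusupp, ?_⟩
      dsimp only
      rw [comp_inl_sum]
    · rintro ⟨nu, hnu0, hnusupp, rfl⟩
      refine ⟨∑ i, nu i • a i, (hGchar _).2 ⟨nu, hnu0, hnusupp, rfl⟩, ?_⟩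
      dsimp only
      rw [comp_inl_sum]
  refine ⟨⟨xs, hxsF⟩, faceOf (dualCone Cset) ush,
    ⟨⟨⟨0, (hGchar 0).2 ⟨0, fun i => le_refl 0, fun i h => absurd rfl h, by simp⟩⟩, ush, rfl⟩,
      hTG, hGmin⟩, hprojG⟩

end Key

/-- the normal fan of the fiber `C_v` is the `v`-induced `π^∨`-coherent
subdivision of `π^∨(C^∨)`. -/
theorem normal_fan_fiber_eq_coherent_subdivision (m d : ℕ)
    (C : Set ((Fin m ⊕ Fin d) → ℚ))
    (hC : IsPolyhedralCone C) (hfull : Submodule.span ℚ C = ⊤)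
    (v : Fin d → ℚ)
    (hv : v ∈ (fun x : (Fin m ⊕ Fin d) → ℚ => x ∘ Sum.inr) '' C) :
    {S : Set (Fin m → ℚ) | ∃ F, IsFaceOf {x' : Fin m → ℚ | Sum.elim x' v ∈ C} F ∧
        S = normalCone {x' : Fin m → ℚ | Sum.elim x' v ∈ C} F}
      = {S : Set (Fin m → ℚ) |
          ∃ w ∈ (fun u : (Fin m ⊕ Fin d) → ℚ => u ∘ Sum.inl) '' dualCone C,
          ∃ G, IsSmallestFaceContaining (dualCone C)
              {u : (Fin m ⊕ Fin d) → ℚ |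
                u ∘ Sum.inr ∈ faceOf {y : Fin d → ℚ | Sum.elim w y ∈ dualCone C} v ∧
                  u ∘ Sum.inl = w} G ∧
            S = (fun u : (Fin m ⊕ Fin d) → ℚ => u ∘ Sum.inl) '' G} := by
  classical
  obtain ⟨r, a, rfl⟩ := hC
  obtain ⟨x₀full, hx₀C, hx₀v⟩ := hv
  have hx₀ : ∀ i, 0 ≤ dotp (a i) (Sum.elim (x₀full ∘ Sum.inl) v) := by
    intro i
    have he : Sum.elim (x₀full ∘ Sum.inl) v = x₀full := by
      rw [← hx₀v]
      exact elim_comp_self x₀full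
    rw [he]
    exact hx₀C i
  have hsplit : ∀ (i : Fin r) (x' : Fin m → ℚ),
      dotp (a i) (Sum.elim x' v) = dotp (a i ∘ Sum.inl) x' + dotp (a i ∘ Sum.inr) v := by
    intro i x'
    rw [dotp_sumElim_split]
    simp
  have hconeOf : ∀ (w₀ x₁ : Fin m → ℚ),
      x₁ ∈ faceOf {x' : Fin m → ℚ | Sum.elim x' v ∈ {x | ∀ i, 0 ≤ dotp (a i) x}} w₀ →
      ∃ lam : Fin r → ℚ, (∀ i, 0 ≤ lam i) ∧ w₀ = ∑ i, lam i • (a i ∘ Sum.inl) := by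
    intro w₀ x₁ hx₁
    obtain ⟨nu, h0, hrep, _⟩ := exists_kkt (fun i => a i ∘ Sum.inl)
      (fun i => -(dotp (a i ∘ Sum.inr) v)) w₀ x₁
      (fun j => by
        have h1 := hx₁.1 j
        rw [hsplit j x₁] at h1
        show -(dotp (a j ∘ Sum.inr) v) ≤ dotp (a j ∘ Sum.inl) x₁
        linarith)
      (fun y hy => hx₁.2 y (by
        show ∀ i, 0 ≤ dotp (a i) (Sum.elim y v)
        intro i
        rw [hsplit i y]
        have h2 := hy i
        linarith))
    exact ⟨nu, h0, hrep⟩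
  have hdualrep : ∀ u₀ ∈ dualCone {x : (Fin m ⊕ Fin d) → ℚ | ∀ i, 0 ≤ dotp (a i) x},
      ∃ lam : Fin r → ℚ, (∀ i, 0 ≤ lam i) ∧ u₀ = ∑ i, lam i • a i := by
    intro u₀ hu₀
    rcases farkas a u₀ with h | ⟨z, hz1, hz2⟩
    · exact h
    · exact absurd (hu₀ z hz1) (not_le.2 hz2)
  ext S
  constructor
  · rintro ⟨F, ⟨⟨x₁, hx₁F⟩, w₀, rfl⟩, hS⟩
    obtain ⟨lam0, hlam0, hw₀⟩ := hconeOf w₀ x₁ hx₁F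
    obtain ⟨hne, G, hsmall, hproj⟩ := key_lemma a v (x₀full ∘ Sum.inl) hx₀ w₀ lam0 hlam0 hw₀
    refine ⟨w₀, ⟨∑ i, lam0 i • a i, ?_, ?_⟩, G, hsmall, ?_⟩
    · intro x hx
      rw [dotp_sum_left]
      exact Finset.sum_nonneg fun i _ => mul_nonneg (hlam0 i) (hx i)
    · dsimp only
      rw [comp_inl_sum]
      exact hw₀.symm
    · rw [hS]
      exact hproj.symm
  · rintro ⟨w, ⟨u₀, hu₀, hwproj⟩, G', hG'small, hS⟩
    obtain ⟨lam, hlam, hrep⟩ := hdualrep u₀ hu₀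
    have hwrep : w = ∑ i, lam i • (a i ∘ Sum.inl) := by
      rw [← hwproj, hrep]
      dsimp only
      rw [comp_inl_sum]
    obtain ⟨⟨xsf, hxsf⟩, G, hsmall, hproj⟩ := key_lemma a v (x₀full ∘ Sum.inl) hx₀ w lam hlam hwrep
    have hGG' : G' = G := by
      apply Set.Subset.antisymm
      · exact hG'small.2.2 G hsmall.1 hsmall.2.1
      · exact hsmall.2.2 G' hG'small.1 hG'small.2.1
    refine ⟨faceOf {x' : Fin m → ℚ | Sum.elim x' v ∈ {x | ∀ i, 0 ≤ dotp (a i) x}} w,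
      ⟨⟨xsf, hxsf⟩, w, rfl⟩, ?_⟩
    rw [hS, hGG']
    exact hproj
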